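/- Let γ, δ ∈ P(X) be connected of type rro. Then Γ(γ) is rp-homomorphic to Γ(δ) if and only if there exist a maximal right ray η in γ and a maximal right ray ξ in δ such that the sequence ⟨ξ^δ_n⟩ dominates the sequence ⟨η^γ_n⟩. -/

import Mathlib

namespace ConjPaper

open Classical

/-- Partial transformations of `X`. -/
abbrev PT (X : Type*) := X → Option X

variable {X : Type*}

/-- Left-to-right composition: `x(αφ) = (xα)φ`. -/
def pcomp (α φ : PT X) : PT X := fun x => (α x).bind φ

/-- The zero of `P(X)`: the empty transformation. -/
def pzero : PT X := fun _ => none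

/-- The identity of `P(X)`. -/
def pid : PT X := fun x => some x

/-- The domain of a partial transformation. -/
def pdom (α : PT X) : Set X := {x | α x ≠ none}

/-- The image of a partial transformation. -/
def pim (α : PT X) : Set X := {y | ∃ x, α x = some y}

/-- The span: `dom(α) ∪ im(α)`. -/
def pspan (α : PT X) : Set X := pdom α ∪ pim α

/-- Iterates `γ^k` of a partial transformation (`γ^0 = id`). -/
def pit (α : PT X) : ℕ → PT X
  | 0 => pid
  | n + 1 => pcomp (pit α n) α

/-- `φ` is a restrictive partial homomorphism (rp-homomorphism) from `Γ(α)` to `Γ(β)`: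
(a) every arc `x → y` of `Γ(α)` has `x, y ∈ dom(φ)` and `xφ → yφ` an arc of `Γ(β)`;
(b) if `x` is terminal in `Γ(α)` and `x ∈ dom(φ)`, then `xφ` is terminal in `Γ(β)`. -/
def IsRpHom (α β φ : PT X) : Prop :=
  (∀ x y, α x = some y →
    ∃ x' y', φ x = some x' ∧ φ y = some y' ∧ β x' = some y') ∧
  (∀ x x', α x = none → φ x = some x' → β x' = none)

/-- `γ` is connected: `γ ≠ 0` and any two points of `span(γ)` reach a common point
under nonnegative iterates of `γ`. -/
def Connected (γ : PT X) : Prop :=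
  γ ≠ pzero ∧ ∀ x ∈ pspan γ, ∀ y ∈ pspan γ,
    ∃ k m z, pit γ k x = some z ∧ pit γ m y = some z

/-- `γ` has a cycle (of some length `k ≥ 1`). -/
def HasCycleAny (γ : PT X) : Prop := ∃ k, 1 ≤ k ∧ ∃ x, pit γ k x = some x

/-- A right ray in `γ`: pairwise distinct `x₀, x₁, x₂, …` with `xₙγ = xₙ₊₁`. -/
def IsRightRay (γ : PT X) (f : ℕ → X) : Prop :=
  Function.Injective f ∧ ∀ n, γ (f n) = some (f (n + 1))

/-- A maximal right ray: a right ray with `x₀ ∉ im(γ)`. -/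
def IsMaxRightRay (γ : PT X) (f : ℕ → X) : Prop :=
  IsRightRay γ f ∧ f 0 ∉ pim γ

/-- A double ray in `γ`: pairwise distinct `(xᵢ)_{i ∈ ℤ}` with `xᵢγ = xᵢ₊₁`. -/
def IsDoubleRay (γ : PT X) (f : ℤ → X) : Prop :=
  Function.Injective f ∧ ∀ i, γ (f i) = some (f (i + 1))

/-- A left ray in `γ`: pairwise distinct `…, x₂, x₁, x₀` with `xₙ₊₁γ = xₙ`. -/
def IsLeftRay (γ : PT X) (f : ℕ → X) : Prop :=
  Function.Injective f ∧ ∀ n, γ (f (n + 1)) = some (f n)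

/-- A chain of length `k ≥ 1` in `γ`: distinct `x₀ → x₁ → ⋯ → x_k`. -/
def IsChain' (γ : PT X) (k : ℕ) (f : ℕ → X) : Prop :=
  1 ≤ k ∧ (∀ i ≤ k, ∀ j ≤ k, f i = f j → i = j) ∧ ∀ i < k, γ (f i) = some (f (i + 1))

/-- A maximal chain: a chain with `x₀ ∉ im(γ)` and `x_k ∉ dom(γ)`. -/
def IsMaxChain' (γ : PT X) (k : ℕ) (f : ℕ → X) : Prop :=
  IsChain' γ k f ∧ f 0 ∉ pim γ ∧ γ (f k) = none

/-- `γ` is of type cho ("chains only"): connected, contains a maximal chain, but has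
no cycles and no rays of any kind. -/
def IsCho (γ : PT X) : Prop :=
  Connected γ ∧ (∃ k f, IsMaxChain' γ k f) ∧ ¬HasCycleAny γ ∧
    (∀ f, ¬IsRightRay γ f) ∧ (∀ f, ¬IsDoubleRay γ f) ∧ (∀ f, ¬IsLeftRay γ f)

/-- `γ` is of type rro ("right rays only"): connected, contains a maximal right ray,
but has no cycles, no double rays, no left rays, and no maximal chains. -/
def IsRro (γ : PT X) : Prop :=
  Connected γ ∧ (∃ f, IsMaxRightRay γ f) ∧ ¬HasCycleAny γ ∧
    (∀ f, ¬IsDoubleRay γ f) ∧ (∀ f, ¬IsLeftRay γ f) ∧ (∀ k f, ¬IsMaxChain' γ k f)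

/-- The ordinal rank `ρ_γ(x)` of `x` with respect to the relation
`R_γ = {(y, x) : yγ = x}` (which is well founded in all cases of interest;
for definiteness the value is `0` if `R_γ` is not well founded). -/
noncomputable def prank (γ : PT X) (x : X) : Ordinal :=
  if h : WellFounded (fun y z : X => γ y = some z) then (h.apply x).rank else 0

/-- `⟨bₙ⟩` dominates `⟨aₙ⟩`: there is `k ≥ 0` with `aₙ ≤ b_{k+n}` for all `n`. -/
def Dominates (b a : ℕ → Ordinal) : Prop := ∃ k, ∀ n, a n ≤ b (k + n)

/-! An rp-homomorphism `φ` maps `γ`-predecessors to `δ`-predecessors, so it cannot lower ranks: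
`ρ_γ(x) ≤ ρ_δ(xφ)`. It maps a maximal right ray `η` of `γ` onto a path of `δ`, and prepending a
finite path (ranks are well founded) turns that path into a maximal right ray `ξ` of `δ` dominating
`η`. Conversely, if `ρ_γ(ηₙ) ≤ ρ_δ(ξ_{k+n})`, send `ηₙ` to `ξ_{k+n}` and define `φ` on the other
points of `dom(γ)` by induction on their distance to `η`: if `xγ = y` and `ρ_γ(y) ≤ ρ_δ(yφ)`, then
`ρ_γ(x) < ρ_δ(yφ)`, so `yφ` has a `δ`-predecessor of rank at least `ρ_γ(x)`, which we take as `xφ`.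
For `γ` of type rro every point of `im(γ)` lies in `dom(γ)` and reaches `η`, so this defines `φ`
on all of `dom(γ)` and no terminal point of `Γ(γ)` lies in `dom(φ)`. -/

theorem pit_succ' (γ : PT X) (n : ℕ) (x : X) :
    pit γ (n + 1) x = (γ x).bind (pit γ n) := by
  induction n generalizing x with
  | zero =>
    change γ x = (γ x).bind some
    cases γ x <;> rfl
  | succ n ih =>
    change (pit γ (n + 1) x).bind γ = _
    rw [ih]
    cases γ x <;> rfl

theorem pit_of_path {γ : PT X} {f : ℕ → X} {m : ℕ}
    (hf : ∀ i < m, γ (f i) = some (f (i + 1))) {s t : ℕ} (h : s + t ≤ m) :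
    pit γ t (f s) = some (f (s + t)) := by
  induction t with
  | zero => rfl
  | succ t ih =>
    change (pit γ t (f s)).bind γ = _
    rw [ih (by omega), Option.bind_some, hf _ (by omega)]
    rfl

theorem eq_of_path_of_not_hasCycleAny {γ : PT X} (hγ : ¬HasCycleAny γ) {f : ℕ → X} {m : ℕ}
    (hf : ∀ i < m, γ (f i) = some (f (i + 1))) {i j : ℕ} (hi : i ≤ m) (hj : j ≤ m)
    (h : f i = f j) : i = j := by
  wlog hij : i < j generalizing i j
  · rcases (not_lt.1 hij).lt_or_eq with hji | hji
    · exact (this hj hi h.symm hji).symm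
    · exact hji.symm
  refine absurd ⟨j - i, by omega, f i, ?_⟩ hγ
  rw [pit_of_path hf (by omega : i + (j - i) ≤ m), Nat.add_sub_cancel' hij.le, h]

theorem isRightRay_of_not_hasCycleAny {γ : PT X} (hγ : ¬HasCycleAny γ) {f : ℕ → X}
    (hf : ∀ n, γ (f n) = some (f (n + 1))) : IsRightRay γ f :=
  ⟨fun i j h => eq_of_path_of_not_hasCycleAny hγ (m := i + j) (fun n _ => hf n)
    (Nat.le_add_right i j) (Nat.le_add_left j i) h, hf⟩

theorem isLeftRay_of_not_hasCycleAny {γ : PT X} (hγ : ¬HasCycleAny γ) {f : ℕ → X}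
    (hf : ∀ n, γ (f (n + 1)) = some (f n)) : IsLeftRay γ f := by
  refine ⟨fun i j h => ?_, hf⟩
  have hrev : ∀ n < i + j, γ (f (i + j - n)) = some (f (i + j - (n + 1))) := fun n hn => by
    rw [← hf, show i + j - (n + 1) + 1 = i + j - n by omega]
  have := eq_of_path_of_not_hasCycleAny hγ hrev (i := j) (j := i) (by omega) (by omega)
    (by rwa [Nat.add_sub_cancel, Nat.add_sub_cancel_left])
  omega

theorem IsRro.wellFounded {γ : PT X} (hγ : IsRro γ) :
    WellFounded (fun y z : X => γ y = some z) :=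
  wellFounded_iff_isEmpty_descending_chain.2
    ⟨fun ⟨f, hf⟩ => hγ.2.2.2.2.1 f (isLeftRay_of_not_hasCycleAny hγ.2.2.1 hf)⟩

theorem exists_backward_extension {γ : PT X} (hwf : WellFounded (fun y z : X => γ y = some z))
    (g : ℕ → X) : ∃ m, ∃ p : ℕ → X, p 0 ∉ pim γ ∧ (∀ n, p (m + n) = g n) ∧
      ∀ i < m, γ (p i) = some (p (i + 1)) := by
  obtain ⟨x, hx⟩ : ∃ x, g 0 = x := ⟨_, rfl⟩
  induction x using hwf.induction generalizing g with
  | _ x ih =>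
    by_cases hxim : x ∈ pim γ
    · obtain ⟨v, hv⟩ := hxim
      obtain ⟨m, p, hp0, hpg, hparc⟩ := ih v hv (fun | 0 => v | n + 1 => g n) rfl
      refine ⟨m + 1, p, hp0, fun n => by rw [Nat.add_right_comm]; exact hpg (n + 1),
        fun i hi => ?_⟩
      rcases (Nat.lt_succ_iff.1 hi).lt_or_eq with hi | rfl
      · exact hparc i hi
      · rw [← Nat.add_zero i, hpg 0, hpg 1]
        change γ v = some (g 0)
        rwa [hx]
    · exact ⟨0, g, hx ▸ hxim, fun n => by rw [Nat.zero_add], fun i hi => absurd hi i.not_lt_zero⟩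

theorem IsRro.ne_none_of_mem_pim {γ : PT X} (hγ : IsRro γ) {x : X} (hx : x ∈ pim γ) :
    γ x ≠ none := by
  intro hxn
  obtain ⟨m, p, hp0, hpx, hparc⟩ := exists_backward_extension hγ.wellFounded (fun _ => x)
  have hpm : p m = x := hpx 0
  have hm : 1 ≤ m := Nat.one_le_iff_ne_zero.2 fun hm => hp0 (hm ▸ hpm ▸ hx)
  exact hγ.2.2.2.2.2 m p ⟨⟨hm, fun i hi j hj => eq_of_path_of_not_hasCycleAny hγ.2.2.1 hparc hi hj,
    hparc⟩, hp0, hpm ▸ hxn⟩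

theorem Connected.exists_pit_eq_rightRay {γ : PT X} (hγ : Connected γ) {η : ℕ → X}
    (hη : IsRightRay γ η) {x : X} (hx : γ x ≠ none) : ∃ a b, pit γ a x = some (η b) := by
  obtain ⟨a, b, z, hxz, hηz⟩ := hγ.2 x (Or.inl hx) (η 0) (Or.inl (by simp [pdom, hη.2 0]))
  rw [pit_of_path (fun i _ => hη.2 i) (le_refl (0 + b)), Option.some_inj] at hηz
  exact ⟨a, 0 + b, hηz ▸ hxz⟩

theorem prank_eq_iSup {γ : PT X} (hwf : WellFounded (fun y z : X => γ y = some z)) (x : X) :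
    prank γ x = ⨆ y : { y : X // γ y = some x }, Order.succ (prank γ y) := by
  simp only [prank, dif_pos hwf]
  exact (hwf.apply x).rank_eq

theorem prank_lt_of_eq_some {γ : PT X} (hwf : WellFounded (fun y z : X => γ y = some z))
    {x y : X} (h : γ y = some x) : prank γ y < prank γ x := by
  simp only [prank, dif_pos hwf]
  exact Acc.rank_lt_of_rel (hwf.apply x) h

theorem exists_eq_some_le_prank {γ : PT X} (hwf : WellFounded (fun y z : X => γ y = some z))
    {x : X} {o : Ordinal} (h : o < prank γ x) : ∃ y, γ y = some x ∧ o ≤ prank γ y := by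
  rw [prank_eq_iSup hwf, Ordinal.lt_iSup_iff] at h
  obtain ⟨⟨y, hy⟩, h⟩ := h
  exact ⟨y, hy, Order.lt_succ_iff.mp h⟩

theorem IsRpHom.prank_le_prank {γ δ φ : PT X} (hφ : IsRpHom γ δ φ)
    (hwfγ : WellFounded (fun y z : X => γ y = some z))
    (hwfδ : WellFounded (fun y z : X => δ y = some z)) {x x' : X} (hx : φ x = some x') :
    prank γ x ≤ prank δ x' := by
  induction x using hwfγ.induction generalizing x' with
  | _ x ih =>
    rw [prank_eq_iSup hwfγ]
    refine Ordinal.iSup_le fun ⟨y, hy⟩ => ?_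
    obtain ⟨y', x'', hy', hx'', harc⟩ := hφ.1 y x hy
    obtain rfl : x'' = x' := Option.some_injective _ (hx''.symm.trans hx)
    exact Order.succ_le_of_lt ((ih y hy hy').trans_lt (prank_lt_of_eq_some hwfδ harc))

theorem IsRpHom.exists_isMaxRightRay_dominates {γ δ φ : PT X} (hφ : IsRpHom γ δ φ)
    (hwfγ : WellFounded (fun y z : X => γ y = some z))
    (hwfδ : WellFounded (fun y z : X => δ y = some z)) (hδ : ¬HasCycleAny δ) {η : ℕ → X}
    (hη : IsRightRay γ η) : ∃ ξ, IsMaxRightRay δ ξ ∧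
      Dominates (fun n => prank δ (ξ n)) (fun n => prank γ (η n)) := by
  have hdom : ∀ n, ∃ x', φ (η n) = some x' := fun n => by
    obtain ⟨x', _, h, _⟩ := hφ.1 _ _ (hη.2 n)
    exact ⟨x', h⟩
  choose g hg using hdom
  have harc : ∀ n, δ (g n) = some (g (n + 1)) := fun n => by
    obtain ⟨x', y', hx', hy', h⟩ := hφ.1 _ _ (hη.2 n)
    rw [hg, Option.some_inj] at hx' hy'
    rwa [hx', hy']
  obtain ⟨m, ξ, hξ0, hξg, hξarc⟩ := exists_backward_extension hwfδ g
  have hξ : ∀ n, δ (ξ n) = some (ξ (n + 1)) := fun n => by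
    rcases lt_or_ge n m with hn | hn
    · exact hξarc n hn
    · obtain ⟨j, rfl⟩ := Nat.exists_eq_add_of_le hn
      rw [hξg, show m + j + 1 = m + (j + 1) from rfl, hξg]
      exact harc j
  refine ⟨ξ, ⟨isRightRay_of_not_hasCycleAny hδ hξ, hξ0⟩, m, fun n => ?_⟩
  dsimp only
  rw [hξg]
  exact hφ.prank_le_prank hwfγ hwfδ (hg n)

/-- The least number of steps from `x` to the ray `η`; `0` also when `x` never reaches `η`. -/
noncomputable def distToRay (γ : PT X) (η : ℕ → X) (x : X) : ℕ :=
  if h : ∃ a b, pit γ a x = some (η b) then Nat.find h else 0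

section distToRay

variable {γ : PT X} {η : ℕ → X}

theorem distToRay_eq_find {x : X} (h : ∃ a b, pit γ a x = some (η b)) :
    distToRay γ η x = Nat.find h :=
  dif_pos h

theorem distToRay_apply (b : ℕ) : distToRay γ η (η b) = 0 := by
  rw [distToRay_eq_find ⟨0, b, rfl⟩, Nat.find_eq_zero]
  exact ⟨b, rfl⟩

theorem exists_eq_of_distToRay_eq_zero {x : X} (h : ∃ a b, pit γ a x = some (η b))
    (h0 : distToRay γ η x = 0) : ∃ b, x = η b := by
  rw [distToRay_eq_find h, Nat.find_eq_zero] at h0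
  obtain ⟨b, hb⟩ := h0
  exact ⟨b, Option.some_injective _ hb⟩

theorem distToRay_of_eq_some {x y : X} {n : ℕ} (hxy : γ x = some y)
    (h : ∃ a b, pit γ a x = some (η b)) (hx : distToRay γ η x = n + 1) :
    distToRay γ η y = n := by
  have hpit : ∀ a, pit γ (a + 1) x = pit γ a y := fun a => by
    rw [pit_succ', hxy, Option.bind_some]
  rw [distToRay_eq_find h, Nat.find_eq_iff] at hx
  simp only [hpit] at hx
  rw [distToRay_eq_find ⟨n, hx.1⟩, Nat.find_eq_iff]
  exact ⟨hx.1, fun k hk => by simpa only [hpit] using hx.2 (k + 1) (by omega)⟩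

end distToRay

/-- A `δ`-predecessor of `t` of rank at least `o`; `t` itself when there is none. -/
noncomputable def predAbove (δ : PT X) (o : Ordinal) (t : X) : X :=
  if h : ∃ z, δ z = some t ∧ o ≤ prank δ z then h.choose else t

theorem predAbove_spec {δ : PT X} (hwf : WellFounded (fun y z : X => δ y = some z))
    {o : Ordinal} {t : X} (h : o < prank δ t) :
    δ (predAbove δ o t) = some t ∧ o ≤ prank δ (predAbove δ o t) := by
  have hex := exists_eq_some_le_prank hwf h
  rw [predAbove, dif_pos hex]
  exact hex.choose_spec

/-- Level `n` of the rp-homomorphism, meant for points at distance `n` from `η`. -/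
noncomputable def rayLift (γ δ : PT X) (η ξ : ℕ → X) (k : ℕ) : ℕ → X → X
  | 0, x => ξ (k + Function.invFun η x)
  | n + 1, x => predAbove δ (prank γ x) (rayLift γ δ η ξ k n ((γ x).getD x))

theorem rayLift_spec {γ δ : PT X} (hγ : IsRro γ) (hwfδ : WellFounded (fun y z : X => δ y = some z))
    {η ξ : ℕ → X} (hη : IsRightRay γ η) (hξ : IsRightRay δ ξ) {k : ℕ}
    (hdom : ∀ n, prank γ (η n) ≤ prank δ (ξ (k + n))) (n : ℕ) {x y : X} (hxy : γ x = some y)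
    (hx : distToRay γ η x = n) :
    prank γ x ≤ prank δ (rayLift γ δ η ξ k n x) ∧
      δ (rayLift γ δ η ξ k n x) = some (rayLift γ δ η ξ k (distToRay γ η y) y) := by
  have hreach := hγ.1.exists_pit_eq_rightRay hη (x := x) (by simp [hxy])
  induction n generalizing x y with
  | zero =>
    obtain ⟨b, rfl⟩ := exists_eq_of_distToRay_eq_zero hreach hx
    obtain rfl : y = η (b + 1) := Option.some_injective _ (hxy.symm.trans (hη.2 b))
    simp only [rayLift, distToRay_apply, Function.leftInverse_invFun hη.1 _]
    exact ⟨hdom b, hξ.2 (k + b)⟩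
  | succ n ih =>
    have hy := distToRay_of_eq_some hxy hreach hx
    obtain ⟨w, hyw⟩ := Option.ne_none_iff_exists'.1 (hγ.ne_none_of_mem_pim ⟨x, hxy⟩)
    have hrank := (ih hyw hy (hγ.1.exists_pit_eq_rightRay hη (by simp [hyw]))).1
    rw [hy]
    simp only [rayLift, hxy, Option.getD_some]
    exact (predAbove_spec hwfδ ((prank_lt_of_eq_some hγ.wellFounded hxy).trans_le hrank)).symm

theorem exists_isRpHom_of_dominates {γ δ : PT X} (hγ : IsRro γ)
    (hwfδ : WellFounded (fun y z : X => δ y = some z)) {η ξ : ℕ → X} (hη : IsRightRay γ η)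
    (hξ : IsRightRay δ ξ) (hdom : Dominates (fun n => prank δ (ξ n)) (fun n => prank γ (η n))) :
    ∃ φ : PT X, IsRpHom γ δ φ := by
  obtain ⟨k, hk⟩ := hdom
  refine ⟨fun x => if γ x = none then none else some (rayLift γ δ η ξ k (distToRay γ η x) x),
    fun x y hxy => ?_, fun x x' hx hφ => ?_⟩
  · exact ⟨_, _, if_neg (by simp [hxy]), if_neg (hγ.ne_none_of_mem_pim ⟨x, hxy⟩),
      (rayLift_spec hγ hwfδ hη hξ hk _ hxy rfl).2⟩
  · simp [hx] at hφ

/-- Proposition 4.29. Let `γ, δ ∈ P(X)` be connected of type rro.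
Then `Γ(γ)` is rp-homomorphic to `Γ(δ)` iff there are maximal right rays `η` in `γ` and
`ξ` in `δ` such that `⟨ξ_n^δ⟩` dominates `⟨η_n^γ⟩`. -/
theorem rro_rpHomomorphic_iff_dominates (γ δ : PT X) (hγ : IsRro γ) (hδ : IsRro δ) :
    (∃ φ : PT X, IsRpHom γ δ φ) ↔
      ∃ η ξ : ℕ → X, IsMaxRightRay γ η ∧ IsMaxRightRay δ ξ ∧
        Dominates (fun n => prank δ (ξ n)) (fun n => prank γ (η n)) := by
  constructor
  · rintro ⟨φ, hφ⟩
    obtain ⟨η, hη⟩ := hγ.2.1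
    obtain ⟨ξ, hξ, hdom⟩ :=
      hφ.exists_isMaxRightRay_dominates hγ.wellFounded hδ.wellFounded hδ.2.2.1 hη.1
    exact ⟨η, ξ, hη, hξ, hdom⟩
  · rintro ⟨η, ξ, hη, hξ, hdom⟩
    exact exists_isRpHom_of_dominates hγ hδ.wellFounded hη.1 hξ.1 hdom

end ConjPaper
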